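/- (Sandwich ratio lemma of Mitavskiy–Rowe, Lemma 55.) Let π be a stationary distribution of a Markov transition matrix {p_{x→y}} on a finite state space X. Let A, B be complementary subsets of X (A ∩ B = ∅, A ∪ B = X) with π(A) > 0 and π(B) > 0. Suppose U ⊆ X satisfies π(U ∩ A)/π(A) < δ and π(U ∩ B)/π(B) < δ for some 0 < δ < 1. Suppose there are constants λ₁, κ₁, λ₂, κ₂ such that for all b ∈ Uᶜ ∩ B, λ₁ ≤ p_{b→A} ≤ κ₁ and for all a ∈ Uᶜ ∩ A, λ₂ ≤ p_{a→B} ≤ κ₂, where p_{x→Y} = ∑_{y∈Y} p_{x→y}. Then ((1−δ)λ₁)/((1−δ)κ₂ + δ) ≤ π(A)/π(B) ≤ ((1−δ)κ₁ + δ)/((1−δ)λ₂), provided λ₂ > 0. -/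

import Mathlib

/-!
In equilibrium the probability flow from `A` to `B` equals the flow from `B` to `A`:
`∑_{a ∈ A} π(a) p(a → B) = ∑_{b ∈ B} π(b) p(b → A)`. Each flow is a `π`-weighted average of
escape probabilities, which lie in `[0, 1]` everywhere and in the prescribed window `[λ, κ]` off
the set `U` of relative mass `< δ`. So the flow out of `B` is at least `(1 - δ) λ₁ π(B)`, the flow
out of `A` is at most `((1 - δ) κ₂ + δ) π(A)`, and symmetrically; comparing the two flows gives
both bounds on `π(A) / π(B)`.
-/

open Finset

theorem sum_mul_rowSum_eq_of_stationary {X R : Type*} [Fintype X] [DecidableEq X] [CommRing R]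
    (p : X → X → R) (π : X → R) (hprow : ∀ x, ∑ y, p x y = 1)
    (hstat : ∀ y, ∑ x, π x * p x y = π y) {A B : Finset X} (hAB : Disjoint A B)
    (hunion : A ∪ B = univ) :
    ∑ x ∈ A, π x * ∑ y ∈ B, p x y = ∑ x ∈ B, π x * ∑ y ∈ A, p x y := by
  have hsplit : ∀ f : X → R, ∑ x, f x = ∑ x ∈ A, f x + ∑ x ∈ B, f x := fun f => by
    rw [← hunion, sum_union hAB]
  have hinflow : ∑ y ∈ A, π y
      = ∑ x ∈ A, π x * ∑ y ∈ A, p x y + ∑ x ∈ B, π x * ∑ y ∈ A, p x y := by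
    calc ∑ y ∈ A, π y = ∑ y ∈ A, ∑ x, π x * p x y := sum_congr rfl fun y _ => (hstat y).symm
      _ = ∑ x, π x * ∑ y ∈ A, p x y := by rw [sum_comm]; simp only [mul_sum]
      _ = _ := hsplit _
  have houtflow : ∑ x ∈ A, π x
      = ∑ x ∈ A, π x * ∑ y ∈ A, p x y + ∑ x ∈ A, π x * ∑ y ∈ B, p x y := by
    rw [← sum_add_distrib]
    refine sum_congr rfl fun x _ => ?_
    rw [← mul_add, ← hsplit, hprow, mul_one]
  exact add_left_cancel (houtflow.symm.trans hinflow)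

theorem rowSum_mem_Icc {X R : Type*} [Fintype X] [AddCommMonoid R] [One R] [PartialOrder R]
    [IsOrderedAddMonoid R] {p : X → X → R} (hp : ∀ x y, 0 ≤ p x y)
    (hprow : ∀ x, ∑ y, p x y = 1) (A : Finset X) (x : X) :
    0 ≤ ∑ y ∈ A, p x y ∧ ∑ y ∈ A, p x y ≤ 1 :=
  ⟨sum_nonneg fun y _ => hp x y, hprow x ▸ sum_le_univ_sum_of_nonneg (hp x)⟩

theorem sum_inter_add_sum_compl_inter {X M : Type*} [Fintype X] [DecidableEq X] [AddCommMonoid M]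
    (S U : Finset X) (g : X → M) :
    ∑ x ∈ U ∩ S, g x + ∑ x ∈ Uᶜ ∩ S, g x = ∑ x ∈ S, g x := by
  rw [inter_comm U, inter_comm Uᶜ, ← sdiff_eq_inter_compl, sum_inter_add_sum_sdiff]

section WeightedSum

variable {X R : Type*} [Fintype X] [DecidableEq X] [CommRing R] [LinearOrder R]
  [IsStrictOrderedRing R] {S U : Finset X} {w f : X → R} {δ : R}

theorem le_sum_mul_of_le_on_compl (hw : ∀ x ∈ S, 0 ≤ w x) (hf : ∀ x ∈ S, 0 ≤ f x)
    (hU : ∑ x ∈ U ∩ S, w x ≤ δ * ∑ x ∈ S, w x) {l : R} (hl : 0 ≤ l)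
    (hlf : ∀ x ∈ Uᶜ ∩ S, l ≤ f x) :
    (1 - δ) * l * ∑ x ∈ S, w x ≤ ∑ x ∈ S, w x * f x := by
  have hmass : ∑ x ∈ Uᶜ ∩ S, w x = ∑ x ∈ S, w x - ∑ x ∈ U ∩ S, w x :=
    eq_sub_of_add_eq' (sum_inter_add_sum_compl_inter S U w)
  have hon : 0 ≤ ∑ x ∈ U ∩ S, w x * f x :=
    sum_nonneg fun x hx => mul_nonneg (hw x (mem_of_mem_inter_right hx))
      (hf x (mem_of_mem_inter_right hx))
  have hoff : l * (∑ x ∈ S, w x - ∑ x ∈ U ∩ S, w x) ≤ ∑ x ∈ Uᶜ ∩ S, w x * f x := by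
    rw [← hmass, mul_sum]
    exact sum_le_sum fun x hx => by
      rw [mul_comm]
      exact mul_le_mul_of_nonneg_left (hlf x hx) (hw x (mem_of_mem_inter_right hx))
  have hsum := sum_inter_add_sum_compl_inter S U (fun x => w x * f x)
  linarith [mul_le_mul_of_nonneg_left hU hl]

theorem sum_mul_le_of_le_on_compl (hw : ∀ x ∈ S, 0 ≤ w x) (hf : ∀ x ∈ S, f x ≤ 1)
    (hU : ∑ x ∈ U ∩ S, w x ≤ δ * ∑ x ∈ S, w x) {k : R} (hk : k ≤ 1)
    (hfk : ∀ x ∈ Uᶜ ∩ S, f x ≤ k) :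
    ∑ x ∈ S, w x * f x ≤ ((1 - δ) * k + δ) * ∑ x ∈ S, w x := by
  have hmass : ∑ x ∈ Uᶜ ∩ S, w x = ∑ x ∈ S, w x - ∑ x ∈ U ∩ S, w x :=
    eq_sub_of_add_eq' (sum_inter_add_sum_compl_inter S U w)
  have hon : ∑ x ∈ U ∩ S, w x * f x ≤ ∑ x ∈ U ∩ S, w x :=
    sum_le_sum fun x hx =>
      mul_le_of_le_one_right (hw x (mem_of_mem_inter_right hx)) (hf x (mem_of_mem_inter_right hx))
  have hoff : ∑ x ∈ Uᶜ ∩ S, w x * f x ≤ k * (∑ x ∈ S, w x - ∑ x ∈ U ∩ S, w x) := by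
    rw [← hmass, mul_sum]
    exact sum_le_sum fun x hx => by
      rw [mul_comm k]
      exact mul_le_mul_of_nonneg_left (hfk x hx) (hw x (mem_of_mem_inter_right hx))
  have hsum := sum_inter_add_sum_compl_inter S U (fun x => w x * f x)
  linarith [mul_le_mul_of_nonneg_left hU (sub_nonneg.mpr hk)]

theorem weighted_sum_sandwich (hw : ∀ x ∈ S, 0 ≤ w x) (hf : ∀ x ∈ S, 0 ≤ f x ∧ f x ≤ 1)
    (hU : ∑ x ∈ U ∩ S, w x ≤ δ * ∑ x ∈ S, w x) (hδ : δ ≤ 1) {l k : R}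
    (hlk : ∀ x ∈ Uᶜ ∩ S, l ≤ f x ∧ f x ≤ k) :
    (1 - δ) * l * ∑ x ∈ S, w x ≤ ∑ x ∈ S, w x * f x ∧
      ∑ x ∈ S, w x * f x ≤ ((1 - δ) * k + δ) * ∑ x ∈ S, w x := by
  have hW : 0 ≤ ∑ x ∈ S, w x := sum_nonneg hw
  have hδ' : 0 ≤ 1 - δ := sub_nonneg.mpr hδ
  constructor
  · calc (1 - δ) * l * ∑ x ∈ S, w x ≤ (1 - δ) * max l 0 * ∑ x ∈ S, w x := by
          gcongr; exact le_max_left l 0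
      _ ≤ ∑ x ∈ S, w x * f x :=
          le_sum_mul_of_le_on_compl hw (fun x hx => (hf x hx).1) hU (le_max_right l 0)
            fun x hx => max_le (hlk x hx).1 (hf x (mem_of_mem_inter_right hx)).1
  · calc ∑ x ∈ S, w x * f x ≤ ((1 - δ) * min k 1 + δ) * ∑ x ∈ S, w x :=
          sum_mul_le_of_le_on_compl hw (fun x hx => (hf x hx).2) hU (min_le_right k 1)
            fun x hx => le_min (hlk x hx).2 (hf x (mem_of_mem_inter_right hx)).2
      _ ≤ ((1 - δ) * k + δ) * ∑ x ∈ S, w x := by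
          gcongr; exact min_le_left k 1

end WeightedSum

theorem div_le_div_of_mul_le_mul_of_nonneg {K : Type*} [Field K] [LinearOrder K]
    [IsStrictOrderedRing K] {a b c d : K} (hb : 0 ≤ b) (hc : 0 ≤ c) (hd : 0 < d)
    (h : a * d ≤ b * c) : a / b ≤ c / d := by
  rcases hb.lt_or_eq with hb | rfl
  · rwa [div_le_div_iff₀ hb hd, mul_comm c]
  · rw [div_zero]
    exact div_nonneg hc hd.le

theorem stmt_11_general {X : Type*} [Fintype X] [DecidableEq X]
    (p : X → X → ℝ) (π : X → ℝ)
    (hpnonneg : ∀ x y, 0 ≤ p x y)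
    (hprow : ∀ x, ∑ y, p x y = 1)
    (hπnonneg : ∀ x, 0 ≤ π x)
    (hstat : ∀ y, ∑ x, π x * p x y = π y)
    (A B : Finset X)
    (hdisj : A ∩ B = ∅) (hunion : A ∪ B = Finset.univ)
    (hA : 0 < ∑ x ∈ A, π x) (hB : 0 < ∑ x ∈ B, π x)
    (U : Finset X) (δ : ℝ) (hδ1 : δ < 1)
    (hUA : (∑ x ∈ U ∩ A, π x) / (∑ x ∈ A, π x) < δ)
    (hUB : (∑ x ∈ U ∩ B, π x) / (∑ x ∈ B, π x) < δ)
    (l₁ k₁ l₂ k₂ : ℝ)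
    (hl₂ : 0 < l₂)
    (hbB : ∀ b ∈ Uᶜ ∩ B, l₁ ≤ ∑ y ∈ A, p b y ∧ ∑ y ∈ A, p b y ≤ k₁)
    (hbA : ∀ a ∈ Uᶜ ∩ A, l₂ ≤ ∑ y ∈ B, p a y ∧ ∑ y ∈ B, p a y ≤ k₂) :
    ((1 - δ) * l₁) / ((1 - δ) * k₂ + δ) ≤ (∑ x ∈ A, π x) / (∑ x ∈ B, π x) ∧
    (∑ x ∈ A, π x) / (∑ x ∈ B, π x) ≤ ((1 - δ) * k₁ + δ) / ((1 - δ) * l₂) := by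
  have hAB : Disjoint A B := disjoint_iff_inter_eq_empty.mpr hdisj
  have hflow := sum_mul_rowSum_eq_of_stationary p π hprow hstat hAB hunion
  obtain ⟨hBlow, hBhigh⟩ := weighted_sum_sandwich (fun x _ => hπnonneg x)
    (fun x _ => rowSum_mem_Icc hpnonneg hprow A x)
    ((div_lt_iff₀ hB).mp hUB).le hδ1.le hbB
  obtain ⟨hAlow, hAhigh⟩ := weighted_sum_sandwich (fun x _ => hπnonneg x)
    (fun x _ => rowSum_mem_Icc hpnonneg hprow B x)
    ((div_lt_iff₀ hA).mp hUA).le hδ1.le hbA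
  have hflowA_nonneg : 0 ≤ ∑ x ∈ A, π x * ∑ y ∈ B, p x y :=
    sum_nonneg fun x _ => mul_nonneg (hπnonneg x) (rowSum_mem_Icc hpnonneg hprow B x).1
  constructor
  · -- `(1 - δ) * k₂ + δ ≥ 0` because it bounds the nonnegative flow out of `A`
    refine div_le_div_of_mul_le_mul_of_nonneg
      (nonneg_of_mul_nonneg_left (hflowA_nonneg.trans hAhigh) hA) hA.le hB ?_
    linarith
  · rw [div_le_div_iff₀ hB (mul_pos (sub_pos.mpr hδ1) hl₂)]
    linarith

theorem stmt_11 {X : Type*} [Fintype X] [DecidableEq X]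
    (p : X → X → ℝ) (π : X → ℝ)
    (hpnonneg : ∀ x y, 0 ≤ p x y)
    (hprow : ∀ x, ∑ y, p x y = 1)
    (hπnonneg : ∀ x, 0 ≤ π x)
    (hπsum : ∑ x, π x = 1)
    (hstat : ∀ y, ∑ x, π x * p x y = π y)
    (A B : Finset X)
    (hdisj : A ∩ B = ∅) (hunion : A ∪ B = Finset.univ)
    (hA : 0 < ∑ x ∈ A, π x) (hB : 0 < ∑ x ∈ B, π x)
    (U : Finset X) (δ : ℝ) (hδ0 : 0 < δ) (hδ1 : δ < 1)
    (hUA : (∑ x ∈ U ∩ A, π x) / (∑ x ∈ A, π x) < δ)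
    (hUB : (∑ x ∈ U ∩ B, π x) / (∑ x ∈ B, π x) < δ)
    (l₁ k₁ l₂ k₂ : ℝ)
    (hl₁ : 0 ≤ l₁) (hl₂ : 0 < l₂) (hk₁ : 0 ≤ k₁) (hk₂ : 0 ≤ k₂)
    (hbB : ∀ b ∈ Uᶜ ∩ B, l₁ ≤ ∑ y ∈ A, p b y ∧ ∑ y ∈ A, p b y ≤ k₁)
    (hbA : ∀ a ∈ Uᶜ ∩ A, l₂ ≤ ∑ y ∈ B, p a y ∧ ∑ y ∈ B, p a y ≤ k₂) :
    ((1 - δ) * l₁) / ((1 - δ) * k₂ + δ) ≤ (∑ x ∈ A, π x) / (∑ x ∈ B, π x) ∧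
    (∑ x ∈ A, π x) / (∑ x ∈ B, π x) ≤ ((1 - δ) * k₁ + δ) / ((1 - δ) * l₂) :=
  stmt_11_general p π hpnonneg hprow hπnonneg hstat A B hdisj hunion hA hB U δ hδ1 hUA hUB l₁ k₁ l₂
    k₂ hl₂ hbB hbA
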